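/- arXiv:math/0008231 — 4 statements merged into one kernel-verified Lean document; each statement's English description precedes it below -/
import Mathlib

section
/- If there is no negative cycle, then for all vertices a, b ∈ V and every directed walk W from a to b there exists a directed walk from a to b with no repeated vertices (a directed path) whose weight is at most the weight of W; consequently, whenever some directed walk from a to b exists, the infimum of the weights of directed walks from a to b is attained and equals the minimum weight of a directed path from a to b. -/
/-!
Removing a closed subwalk `v … v` from a walk keeps it a walk with the same endpoints and
changes its weight by minus the weight of that cycle, which is nonnegative when there is no
negative cycle. Repeating this while some vertex occurs twice terminates (the walk gets
shorter) in a path no heavier than the original walk. Paths in a finite graph have length at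
most `|V|`, so there are finitely many of them; a lightest path is then also a lightest walk.
-/

/-- A directed walk from `a` to `b` along edge relation `E`, recorded as the list of its
vertices. -/
def IsWalk {V : Type*} (E : V → V → Prop) (a b : V) (l : List V) : Prop :=
  l.head? = some a ∧ l.getLast? = some b ∧ l.Chain' E

/-- The total weight of a walk. -/
def walkWeight {V : Type*} (δ : V → V → ℝ) (l : List V) : ℝ :=
  ((l.zip l.tail).map fun p => δ p.1 p.2).sum

/-- A negative cycle: a directed walk from some vertex to itself with at least one edge
and negative total weight. -/
def HasNegCycle {V : Type*} (E : V → V → Prop) (δ : V → V → ℝ) : Prop :=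
  ∃ (a : V) (l : List V), IsWalk E a a l ∧ 2 ≤ l.length ∧ walkWeight δ l < 0

theorem List.Duplicate.exists_eq_append {α : Type*} {x : α} {l : List α}
    (h : List.Duplicate x l) :
    ∃ s t u : List α, l = s ++ x :: (t ++ x :: u) := by
  induction h with
  | cons_mem hx =>
    obtain ⟨t, u, rfl⟩ := List.append_of_mem hx
    exact ⟨[], t, u, rfl⟩
  | @cons_duplicate y _ _ ih =>
    obtain ⟨s, t, u, rfl⟩ := ih
    exact ⟨y :: s, t, u, rfl⟩

section Walks

variable {V : Type*} {E : V → V → Prop} {δ : V → V → ℝ}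

@[simp]
theorem walkWeight_singleton (x : V) : walkWeight δ [x] = 0 := by
  simp [walkWeight]

@[simp]
theorem walkWeight_cons_cons (x y : V) (l : List V) :
    walkWeight δ (x :: y :: l) = δ x y + walkWeight δ (y :: l) := by
  simp [walkWeight]

theorem walkWeight_append_cons (x : V) :
    ∀ l₁ l₂ : List V,
      walkWeight δ (l₁ ++ x :: l₂) = walkWeight δ (l₁ ++ [x]) + walkWeight δ (x :: l₂)
  | [], _ => by simp
  | [y], l₂ => by simp
  | y :: z :: l₁, l₂ => by
    simp only [List.cons_append, walkWeight_cons_cons]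
    rw [← List.cons_append, walkWeight_append_cons x (z :: l₁) l₂, List.cons_append]
    ring

theorem walkWeight_eq_add_cycle (s t u : List V) (v : V) :
    walkWeight δ (s ++ v :: (t ++ v :: u)) =
      walkWeight δ (s ++ v :: u) + walkWeight δ (v :: t ++ [v]) := by
  rw [walkWeight_append_cons v s, walkWeight_append_cons v s u, ← List.cons_append,
    walkWeight_append_cons v (v :: t) u]
  ring

theorem isWalk_append_cons_iff {a b x : V} {l₁ l₂ : List V} :
    IsWalk E a b (l₁ ++ x :: l₂) ↔ IsWalk E a x (l₁ ++ [x]) ∧ IsWalk E x b (x :: l₂) := by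
  have head_eq : (l₁ ++ [x]).head? = (l₁ ++ x :: l₂).head? := by cases l₁ <;> rfl
  simp only [IsWalk, head_eq, List.getLast?_append_cons]
  change _ ∧ _ ∧ List.IsChain E _ ↔ (_ ∧ _ ∧ List.IsChain E _) ∧ _ ∧ _ ∧ List.IsChain E _
  rw [List.isChain_split, List.getLast?_singleton, List.head?_cons]
  tauto

theorem IsWalk.remove_cycle {a b v : V} {s t u : List V}
    (h : IsWalk E a b (s ++ v :: (t ++ v :: u))) :
    IsWalk E a b (s ++ v :: u) ∧ IsWalk E v v (v :: t ++ [v]) := by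
  obtain ⟨hs, hvu⟩ := isWalk_append_cons_iff.1 h
  rw [← List.cons_append, isWalk_append_cons_iff] at hvu
  exact ⟨isWalk_append_cons_iff.2 ⟨hs, hvu.2⟩, hvu.1⟩

theorem walkWeight_cycle_nonneg (hneg : ¬ HasNegCycle E δ) {v : V} {c : List V}
    (hc : IsWalk E v v c) (hlen : 2 ≤ c.length) : 0 ≤ walkWeight δ c :=
  not_lt.1 fun hlt => hneg ⟨v, c, hc, hlen, hlt⟩

theorem IsWalk.exists_nodup_walkWeight_le (hneg : ¬ HasNegCycle E δ) {a b : V}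
    {l : List V} (hl : IsWalk E a b l) :
    ∃ l' : List V, IsWalk E a b l' ∧ l'.Nodup ∧ walkWeight δ l' ≤ walkWeight δ l := by
  by_cases hnd : l.Nodup
  · exact ⟨l, hl, hnd, le_rfl⟩
  obtain ⟨v, hv⟩ := List.exists_duplicate_iff_not_nodup.2 hnd
  obtain ⟨s, t, u, rfl⟩ := hv.exists_eq_append
  obtain ⟨hshort, hcycle⟩ := hl.remove_cycle
  have hcycle_nonneg := walkWeight_cycle_nonneg hneg hcycle (by simp)
  obtain ⟨l', hl', hnd', hle⟩ := hshort.exists_nodup_walkWeight_le hneg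
  refine ⟨l', hl', hnd', hle.trans ?_⟩
  rw [walkWeight_eq_add_cycle]
  linarith
termination_by l.length
decreasing_by subst_vars; simp

end Walks

/-- If there is no negative cycle then every directed walk from `a` to `b` can be replaced
by a directed path (a walk with no repeated vertices) from `a` to `b` of weight at most the
weight of the walk; consequently, whenever some walk from `a` to `b` exists, the infimum of
walk weights is attained, and equals the minimum weight of a path from `a` to `b`. -/
theorem walk_shortcut_to_path_and_min_attained
    {V : Type*} [Fintype V] (E : V → V → Prop) (δ : V → V → ℝ)
    (hnoneg : ¬ HasNegCycle E δ) (a b : V) :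
    (∀ l : List V, IsWalk E a b l →
        ∃ l' : List V, IsWalk E a b l' ∧ l'.Nodup ∧ walkWeight δ l' ≤ walkWeight δ l) ∧
      ((∃ l : List V, IsWalk E a b l) →
        ∃ m : ℝ,
          IsLeast {x : ℝ | ∃ l : List V, IsWalk E a b l ∧ walkWeight δ l = x} m ∧
          IsLeast {x : ℝ | ∃ l : List V, IsWalk E a b l ∧ l.Nodup ∧ walkWeight δ l = x} m) := by
  refine ⟨fun l hl => hl.exists_nodup_walkWeight_le hnoneg, ?_⟩
  rintro ⟨l₀, hl₀⟩
  have paths_finite : {l : List V | IsWalk E a b l ∧ l.Nodup}.Finite :=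
    (List.finite_length_le V (Fintype.card V)).subset fun l hl => hl.2.length_le_card
  obtain ⟨p₀, hp₀, hnd₀, -⟩ := hl₀.exists_nodup_walkWeight_le hnoneg
  obtain ⟨p, ⟨hp, hnd⟩, hmin⟩ :=
    Set.exists_min_image _ (walkWeight δ) paths_finite ⟨p₀, hp₀, hnd₀⟩
  refine ⟨walkWeight δ p, ⟨⟨p, hp, rfl⟩, ?_⟩, ⟨⟨p, hp, hnd, rfl⟩, ?_⟩⟩
  · rintro _ ⟨l, hl, rfl⟩
    obtain ⟨l', hl', hnd', hle⟩ := hl.exists_nodup_walkWeight_le hnoneg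
    exact (hmin l' ⟨hl', hnd'⟩).trans hle
  · rintro _ ⟨l, hl, hnd, rfl⟩
    exact hmin l ⟨hl, hnd⟩
end

section
/- Assume S_φ is nonempty. Then the following are equivalent: (1) there exists α : E → ℝ with 0 < α(e) < 1 for every edge e and with Σ_{e incident to v} α(e) = φ(v) for every vertex v; (2) every edge of G is free. -/
/-!
If every edge is free, averaging the indicator vectors of all `φ`-factors gives the required `α`.

Conversely, let `α` be as in (1) and `H` a `φ`-factor. Then `α - 𝟙_H` has zero sum at every vertex
and vanishes on no edge. Colour `G` with two colours and orient the edges of `H` from the `false`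
side to the `true` side and the other edges backwards: `|α - 𝟙_H|` becomes a positive
circulation, so every arc lies on a directed cycle. Such a cycle alternates between edges of `H`
and edges outside `H`, and flipping it turns `H` into a `φ`-factor that omits a prescribed edge
of `H`. An edge outside `H` is handled by passing to complements (`deg - φ`, `E \ H`, `1 - α`).
-/

open Finset
open scoped symmDiff

namespace List

variable {α : Type*} {r : α → α → Prop}

theorem exists_nodup_isChain_cons_of_reflTransGen {a b : α} (h : Relation.ReflTransGen r a b) :
    ∃ l, (a :: l).Nodup ∧ IsChain r (a :: l) ∧ getLast (a :: l) (cons_ne_nil _ _) = b := by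
  induction h using Relation.ReflTransGen.head_induction_on with
  | refl => exact ⟨[], nodup_singleton _, .singleton _, rfl⟩
  | @head c d hcd _ ih =>
    obtain ⟨l, hnd, hch, hlast⟩ := ih
    by_cases hc : c ∈ d :: l
    · obtain ⟨s, t, hst⟩ := append_of_mem hc
      rw [hst] at hnd hch
      refine ⟨t, hnd.of_append_right, hch.right_of_append, ?_⟩
      simp_rw [← hlast, hst, getLast_append_of_ne_nil _ (cons_ne_nil _ _)]
    · exact ⟨d :: l, nodup_cons.2 ⟨hc, hnd⟩, hch.cons_cons hcd, by rwa [getLast_cons_cons]⟩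

theorem formPerm_apply_rel_of_isChain [DecidableEq α] {a : α} {l : List α} (hnd : (a :: l).Nodup)
    (hch : IsChain r (a :: l)) (hclose : r ((a :: l).getLast (cons_ne_nil _ _)) a) {v : α}
    (hv : formPerm (a :: l) v ≠ v) : r v (formPerm (a :: l) v) := by
  obtain ⟨i, hi, rfl⟩ := getElem_of_mem (mem_of_formPerm_apply_ne hv)
  rcases Nat.lt_or_ge (i + 1) (a :: l).length with hlt | hge
  · rw [formPerm_apply_lt_getElem _ hnd i hlt]
    exact hch.getElem i hlt
  · have hlast : (a :: l)[i] = (a :: l).getLast (cons_ne_nil _ _) := by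
      rw [getLast_eq_getElem]
      congr 1
      omega
    rw [hlast, formPerm_apply_getLast]
    exact hclose

end List

section Circulation

variable {V : Type*} [Fintype V] {r : V → V → Prop} [DecidableRel r] {f : V → V → ℝ}

theorem reflTransGen_of_circulation (hpos : ∀ u v, r u v → 0 < f u v)
    (hcons : ∀ u, ∑ v with r u v, f u v = ∑ v with r v u, f v u) {a b : V} (hab : r a b) :
    Relation.ReflTransGen r b a := by
  classical
  -- No arc enters the set `R` of vertices reachable from `b`: it is closed under arcs, so the
  -- flow entering it equals the flow circulating inside it.
  set R : Finset V := {v | Relation.ReflTransGen r b v}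
  have hR : ∀ {v}, v ∈ R ↔ Relation.ReflTransGen r b v := by simp [R]
  have hnonneg : ∀ u v, 0 ≤ if r v u then f v u else 0 := fun u v => by
    split_ifs with h
    exacts [(hpos v u h).le, le_rfl]
  have hout : ∀ u ∈ R, ∑ v with r u v, f u v = ∑ v ∈ R, if r u v then f u v else 0 := by
    intro u hu
    rw [sum_filter]
    refine (sum_subset (subset_univ R) fun v _ hv => ?_).symm
    exact if_neg fun huv => hv (hR.2 ((hR.1 hu).tail huv))
  have hin : ∀ u, ∑ v with r v u, f v u = (∑ v ∈ R, if r v u then f v u else 0) +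
      ∑ v ∈ Rᶜ, if r v u then f v u else 0 := fun u => by
    rw [sum_filter, sum_add_sum_compl]
  have hboundary : ∑ u ∈ R, ∑ v ∈ Rᶜ, (if r v u then f v u else 0) = 0 := by
    have := sum_congr rfl fun u (hu : u ∈ R) => (hout u hu).symm.trans ((hcons u).trans (hin u))
    rw [sum_add_distrib, sum_comm (s := R) (t := R)] at this
    linarith
  by_contra ha
  have := (sum_eq_zero_iff_of_nonneg fun u _ => sum_nonneg fun v _ => hnonneg u v).1
    hboundary b (hR.2 .refl)
  have := (sum_eq_zero_iff_of_nonneg fun v _ => hnonneg b v).1 this a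
    (mem_compl.2 fun h => ha (hR.1 h))
  rw [if_pos hab] at this
  exact (hpos a b hab).ne' this

theorem exists_perm_of_circulation [DecidableEq V] (hpos : ∀ u v, r u v → 0 < f u v)
    (hcons : ∀ u, ∑ v with r u v, f u v = ∑ v with r v u, f v u) {a b : V} (hab : r a b) :
    ∃ σ : Equiv.Perm V, σ a = b ∧ ∀ v, σ v ≠ v → r v (σ v) := by
  obtain ⟨l, hnd, hch, hlast⟩ :=
    List.exists_nodup_isChain_cons_of_reflTransGen (reflTransGen_of_circulation hpos hcons hab)
  refine ⟨(b :: l).formPerm, ?_, fun v hv => ?_⟩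
  · rw [← hlast, List.formPerm_apply_getLast]
  · exact List.formPerm_apply_rel_of_isChain hnd hch (hlast ▸ hab) hv

end Circulation

namespace Equiv.Perm

variable {V : Type*} [DecidableEq V] [Fintype V] (σ : Perm V)

def cycleEdges : Finset (Sym2 V) := σ.support.image fun v => s(v, σ v)

variable {σ}

theorem mk_mem_cycleEdges {v : V} (hv : σ v ≠ v) : s(v, σ v) ∈ σ.cycleEdges :=
  mem_image.2 ⟨v, mem_support.2 hv, rfl⟩

theorem eq_or_eq_of_mem_cycleEdges {e : Sym2 V} (he : e ∈ σ.cycleEdges) {w : V} (hw : w ∈ e) :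
    e = s(w, σ w) ∨ e = s(σ.symm w, w) := by
  obtain ⟨v, -, rfl⟩ := mem_image.1 he
  rcases Sym2.mem_iff.1 hw with rfl | rfl
  exacts [.inl rfl, .inr (by rw [symm_apply_apply])]

end Equiv.Perm

namespace SimpleGraph

section Factors

variable {V : Type*} [Fintype V] [DecidableEq V] (G : SimpleGraph V) [DecidableRel G.Adj]

def IsFactor (φ : V → ℕ) (H : Finset (Sym2 V)) : Prop :=
  H ⊆ G.edgeFinset ∧ ∀ v, #{e ∈ H | v ∈ e} = φ v

def IsFractionalFactor (φ : V → ℕ) (α : Sym2 V → ℝ) : Prop :=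
  ∀ v, ∑ e ∈ G.edgeFinset with v ∈ e, α e = φ v

variable {G}

theorem card_filter_mem_edgeFinset (v : V) : #{e ∈ G.edgeFinset | v ∈ e} = G.degree v := by
  rw [← incidenceFinset_eq_filter, card_incidenceFinset_eq_degree]

theorem sum_filter_mem_edgeFinset {M : Type*} [AddCommMonoid M] (g : Sym2 V → M) (u : V) :
    ∑ e ∈ G.edgeFinset with u ∈ e, g e = ∑ v with G.Adj u v, g s(u, v) := by
  rw [← sum_image fun v _ w _ h => Sym2.congr_right.1 h]
  congr 1
  ext e
  induction e using Sym2.ind with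
  | _ x y =>
    simp only [mem_filter, mem_edgeFinset, mem_edgeSet, Sym2.mem_iff, mem_image, mem_univ,
      true_and]
    constructor
    · rintro ⟨hxy, rfl | rfl⟩
      exacts [⟨y, hxy, rfl⟩, ⟨x, hxy.symm, Sym2.eq_swap⟩]
    · rintro ⟨w, huw, hw⟩
      rcases Sym2.eq_iff.1 hw with ⟨rfl, rfl⟩ | ⟨rfl, rfl⟩
      exacts [⟨huw, .inl rfl⟩, ⟨huw.symm, .inr rfl⟩]

variable {φ : V → ℕ} {H : Finset (Sym2 V)} {α : Sym2 V → ℝ}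

theorem IsFactor.le_degree (hH : G.IsFactor φ H) (v : V) : φ v ≤ G.degree v := by
  rw [← hH.2 v, ← card_filter_mem_edgeFinset]
  exact card_le_card (filter_subset_filter _ hH.1)

theorem IsFactor.compl (hH : G.IsFactor φ H) :
    G.IsFactor (fun v => G.degree v - φ v) (G.edgeFinset \ H) := by
  refine ⟨sdiff_subset, fun v => ?_⟩
  have : {e ∈ G.edgeFinset \ H | v ∈ e} = {e ∈ G.edgeFinset | v ∈ e} \ {e ∈ H | v ∈ e} := by
    ext e
    simp only [mem_filter, mem_sdiff]
    tauto
  rw [this, card_sdiff_of_subset (filter_subset_filter _ hH.1), card_filter_mem_edgeFinset, hH.2]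

theorem IsFractionalFactor.one_sub (hα : G.IsFractionalFactor φ α)
    (hφ : ∀ v, φ v ≤ G.degree v) :
    G.IsFractionalFactor (fun v => G.degree v - φ v) (fun e => 1 - α e) := fun v => by
  rw [sum_sub_distrib, hα, sum_const, card_filter_mem_edgeFinset, Nat.cast_sub (hφ v)]
  simp

theorem IsFactor.symmDiff {C : Finset (Sym2 V)} (hH : G.IsFactor φ H) (hC : C ⊆ G.edgeFinset)
    (hbal : ∀ w, #{e ∈ H | w ∈ e ∧ e ∈ C} = #{e ∈ C | w ∈ e ∧ e ∉ H}) :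
    G.IsFactor φ (H ∆ C) := by
  refine ⟨symmDiff_subset_union.trans (union_subset hH.1 hC), fun w => ?_⟩
  have hsplit : {e ∈ H ∆ C | w ∈ e} = {e ∈ H | w ∈ e ∧ e ∉ C} ∪ {e ∈ C | w ∈ e ∧ e ∉ H} := by
    ext e
    simp only [mem_filter, mem_union, mem_symmDiff]
    tauto
  have hdisj : Disjoint {e ∈ H | w ∈ e ∧ e ∉ C} {e ∈ C | w ∈ e ∧ e ∉ H} :=
    Finset.disjoint_left.2 fun e h₁ h₂ => (mem_filter.1 h₂).2.2 (mem_filter.1 h₁).1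
  have hH_w : #{e ∈ H | w ∈ e ∧ e ∈ C} + #{e ∈ H | w ∈ e ∧ e ∉ C} = #{e ∈ H | w ∈ e} := by
    simp only [← filter_filter, card_filter_add_card_filter_not]
  rw [hsplit, card_union_of_disjoint hdisj, ← hbal, add_comm, hH_w, hH.2]

theorem sum_card_filter_mem_of_isFactor {𝓕 : Finset (Finset (Sym2 V))}
    (h𝓕 : ∀ F ∈ 𝓕, G.IsFactor φ F) (v : V) :
    ∑ e ∈ G.edgeFinset with v ∈ e, #{F ∈ 𝓕 | e ∈ F} = #𝓕 * φ v := by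
  calc ∑ e ∈ G.edgeFinset with v ∈ e, #{F ∈ 𝓕 | e ∈ F}
      = ∑ F ∈ 𝓕, #{e ∈ {e ∈ G.edgeFinset | v ∈ e} | e ∈ F} := by
        simp only [card_filter]
        exact sum_comm
    _ = ∑ F ∈ 𝓕, φ v := sum_congr rfl fun F hF => by
        rw [← (h𝓕 F hF).2 v]
        congr 1
        ext e
        simp only [mem_filter]
        exact ⟨fun h => ⟨h.2, h.1.2⟩, fun h => ⟨⟨(h𝓕 F hF).1 h.1, h.2⟩, h.1⟩⟩
    _ = #𝓕 * φ v := by rw [sum_const, smul_eq_mul]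

theorem exists_strict_isFractionalFactor_of_forall_free (hne : ∃ H, G.IsFactor φ H)
    (hfree : ∀ e ∈ G.edgeFinset,
      ∃ H₁, G.IsFactor φ H₁ ∧ e ∈ H₁ ∧ ∃ H₂, G.IsFactor φ H₂ ∧ e ∉ H₂) :
    ∃ α : Sym2 V → ℝ, (∀ e ∈ G.edgeFinset, 0 < α e ∧ α e < 1) ∧ G.IsFractionalFactor φ α := by
  classical
  set 𝓕 := G.edgeFinset.powerset.filter (G.IsFactor φ)
  have hmem : ∀ {F}, G.IsFactor φ F → F ∈ 𝓕 := fun hF => mem_filter.2 ⟨mem_powerset.2 hF.1, hF⟩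
  obtain ⟨H, hH⟩ := hne
  have h𝓕 : (0 : ℝ) < #𝓕 := by exact_mod_cast card_pos.2 ⟨H, hmem hH⟩
  refine ⟨fun e => #{F ∈ 𝓕 | e ∈ F} / #𝓕, fun e he => ?_, fun v => ?_⟩
  · obtain ⟨H₁, hH₁, heH₁, H₂, hH₂, heH₂⟩ := hfree e he
    have hpos : 0 < #{F ∈ 𝓕 | e ∈ F} := card_pos.2 ⟨H₁, mem_filter.2 ⟨hmem hH₁, heH₁⟩⟩
    have hlt : #{F ∈ 𝓕 | e ∈ F} < #𝓕 := card_lt_card (filter_ssubset.2 ⟨H₂, hmem hH₂, heH₂⟩)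
    exact ⟨div_pos (by exact_mod_cast hpos) h𝓕, (div_lt_one h𝓕).2 (by exact_mod_cast hlt)⟩
  · rw [← sum_div, ← Nat.cast_sum, sum_card_filter_mem_of_isFactor fun F hF => (mem_filter.1 hF).2,
      Nat.cast_mul, mul_div_cancel_left₀ _ h𝓕.ne']

end Factors

section Alternating

variable {V : Type*} {G : SimpleGraph V} (c : G.Coloring Bool) (H : Finset (Sym2 V))

/-- The orientation of `G` in which the edges of `H` leave the `false` side and the other edges
leave the `true` side; its directed cycles alternate between `H` and its complement. -/
def AltArc (a b : V) : Prop :=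
  G.Adj a b ∧ (s(a, b) ∈ H ↔ c a = false)

variable {c H}

theorem AltArc.not_swap {a b : V} (h : AltArc c H a b) : ¬AltArc c H b a := by
  rintro ⟨-, hba⟩
  have hc := c.valid h.1
  rw [Sym2.eq_swap] at hba
  cases ha : c a <;> cases hb : c b <;> simp_all [AltArc]

theorem altArc_or_altArc_swap {a b : V} (h : G.Adj a b) : AltArc c H a b ∨ AltArc c H b a := by
  have hc := c.valid h
  rw [AltArc, AltArc, Sym2.eq_swap]
  cases ha : c a <;> cases hb : c b <;> by_cases hH : s(b, a) ∈ H <;> simp_all [h.symm]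

variable [DecidableEq V]

variable (c H) in
/-- When `0 ≤ α ≤ 1`, on every arc `AltArc c H a b` this is `|α e - 𝟙_H e|` with `e = s(a, b)`. -/
def altWeight (α : Sym2 V → ℝ) (a b : V) : ℝ :=
  (if c a then 1 else -1) * (α s(a, b) - if s(a, b) ∈ H then 1 else 0)

theorem altWeight_swap {α : Sym2 V → ℝ} {a b : V} (h : G.Adj a b) :
    altWeight c H α b a = -altWeight c H α a b := by
  have hc := c.valid h
  unfold altWeight
  rw [Sym2.eq_swap]
  cases ha : c a <;> cases hb : c b <;> simp_all

variable [Fintype V] [DecidableRel G.Adj] {φ : V → ℕ} {α : Sym2 V → ℝ}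

theorem altWeight_pos (hα : ∀ e ∈ G.edgeFinset, 0 < α e ∧ α e < 1) {a b : V}
    (h : AltArc c H a b) : 0 < altWeight c H α a b := by
  obtain ⟨hα₀, hα₁⟩ := hα _ (mem_edgeFinset.2 (G.mem_edgeSet.2 h.1))
  have := h.2
  unfold altWeight
  cases ha : c a <;> by_cases hH : s(a, b) ∈ H <;> simp_all

theorem altWeight_conservation (hH : G.IsFactor φ H) (hα : G.IsFractionalFactor φ α)
    [DecidableRel (AltArc c H)] (u : V) :
    ∑ v with AltArc c H u v, altWeight c H α u v =
      ∑ v with AltArc c H v u, altWeight c H α v u := by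
  have hzero : ∑ v with G.Adj u v, altWeight c H α u v = 0 := by
    have hH_u : {e ∈ G.edgeFinset | u ∈ e ∧ e ∈ H} = {e ∈ H | u ∈ e} := by
      ext e
      simp only [mem_filter]
      exact ⟨fun h => ⟨h.2.2, h.2.1⟩, fun h => ⟨hH.1 h.1, h.2, h.1⟩⟩
    simp only [altWeight, ← mul_sum]
    rw [← sum_filter_mem_edgeFinset (fun e => α e - if e ∈ H then 1 else 0), sum_sub_distrib,
      sum_boole, hα u, filter_filter, hH_u, hH.2 u, sub_self, mul_zero]
  have hsplit : ∀ v, (if G.Adj u v then altWeight c H α u v else 0) =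
      (if AltArc c H u v then altWeight c H α u v else 0) -
        if AltArc c H v u then altWeight c H α v u else 0 := fun v => by
    by_cases huv : G.Adj u v
    · rcases altArc_or_altArc_swap (c := c) (H := H) huv with h | h
      · simp [huv, h, h.not_swap]
      · simp [huv, h, h.not_swap, altWeight_swap huv]
    · have : ¬AltArc c H u v := fun h => huv h.1
      have : ¬AltArc c H v u := fun h => huv h.1.symm
      simp_all
  rw [sum_filter] at hzero
  simp only [hsplit, sum_sub_distrib, ← sum_filter] at hzero
  linarith

theorem cycleEdges_subset_edgeFinset {σ : Equiv.Perm V}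
    (hσ : ∀ v, σ v ≠ v → AltArc c H v (σ v)) : σ.cycleEdges ⊆ G.edgeFinset := by
  simp only [Equiv.Perm.cycleEdges, image_subset_iff, Equiv.Perm.mem_support]
  exact fun v hv => mem_edgeFinset.2 (hσ v hv).1

theorem card_filter_cycleEdges_mem_eq_not_mem {σ : Equiv.Perm V}
    (hσ : ∀ v, σ v ≠ v → AltArc c H v (σ v)) (w : V) :
    #{e ∈ H | w ∈ e ∧ e ∈ σ.cycleEdges} = #{e ∈ σ.cycleEdges | w ∈ e ∧ e ∉ H} := by
  set C := σ.cycleEdges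
  by_cases hw : σ w = w
  · have hC_w : ∀ e ∈ C, w ∉ e := fun e he hwe => by
      have hσw : σ.symm w = w := by rw [Equiv.symm_apply_eq, hw]
      have := cycleEdges_subset_edgeFinset hσ he
      rcases Equiv.Perm.eq_or_eq_of_mem_cycleEdges he hwe with rfl | rfl <;> simp_all
    rw [filter_false_of_mem fun e _ h => hC_w e h.2 h.1,
      filter_false_of_mem fun e he h => hC_w e he h.1]
  -- The edges of `C` at `w` are `s(w, σ w)` and `s(u, w)`, and exactly one of them lies in `H`.
  set u := σ.symm w
  have hσu : σ u = w := σ.apply_symm_apply w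
  have hu : σ u ≠ u := fun h => hw (h.symm.trans hσu ▸ h)
  have hout : s(w, σ w) ∈ C := Equiv.Perm.mk_mem_cycleEdges hw
  have hin : s(u, w) ∈ C := hσu ▸ Equiv.Perm.mk_mem_cycleEdges hu
  have hleave_w := (hσ w hw).2
  have hleave_u := (hσ u hu).2
  rw [hσu] at hleave_u
  have hcu : c u ≠ c w := c.valid (hσu ▸ (hσ u hu).1)
  have hle : #{e ∈ H | w ∈ e ∧ e ∈ C} + #{e ∈ C | w ∈ e ∧ e ∉ H} ≤ 2 := by
    rw [← card_union_of_disjoint (Finset.disjoint_left.2 fun e h₁ h₂ =>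
      (mem_filter.1 h₂).2.2 (mem_filter.1 h₁).1)]
    refine (card_le_card (t := {s(w, σ w), s(u, w)}) fun e he => ?_).trans card_le_two
    simp only [mem_union, mem_filter] at he
    rcases he with ⟨-, hwe, heC⟩ | ⟨heC, hwe, -⟩ <;>
      rcases Equiv.Perm.eq_or_eq_of_mem_cycleEdges heC hwe with rfl | rfl <;> simp [u]
  have hpos : 0 < #{e ∈ H | w ∈ e ∧ e ∈ C} ∧ 0 < #{e ∈ C | w ∈ e ∧ e ∉ H} := by
    cases hcw : c w
    · have hcu' : c u = true := by simpa [hcw] using hcu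
      exact ⟨card_pos.2 ⟨_, mem_filter.2 ⟨hleave_w.2 hcw, Sym2.mem_mk_left _ _, hout⟩⟩,
        card_pos.2 ⟨_, mem_filter.2 ⟨hin, Sym2.mem_mk_right _ _,
          fun h => by simp [hleave_u.1 h] at hcu'⟩⟩⟩
    · have hcu' : c u = false := by simpa [hcw] using hcu
      exact ⟨card_pos.2 ⟨_, mem_filter.2 ⟨hleave_u.2 hcu', Sym2.mem_mk_right _ _, hin⟩⟩,
        card_pos.2 ⟨_, mem_filter.2 ⟨hout, Sym2.mem_mk_left _ _,
          fun h => by simp [hleave_w.1 h] at hcw⟩⟩⟩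
  omega

theorem IsFactor.exists_not_mem (c : G.Coloring Bool)
    (hα₀₁ : ∀ e ∈ G.edgeFinset, 0 < α e ∧ α e < 1) (hα : G.IsFractionalFactor φ α)
    (hH : G.IsFactor φ H) {e : Sym2 V} (he : e ∈ H) : ∃ H', G.IsFactor φ H' ∧ e ∉ H' := by
  classical
  have heE := hH.1 he
  induction e using Sym2.ind with
  | _ x y =>
  obtain ⟨a, b, hab, hxy⟩ : ∃ a b, AltArc c H a b ∧ s(a, b) = s(x, y) :=
    (altArc_or_altArc_swap (mem_edgeFinset.1 heE)).elim (fun h => ⟨x, y, h, rfl⟩)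
      fun h => ⟨y, x, h, Sym2.eq_swap⟩
  obtain ⟨σ, hσab, hσ⟩ := exists_perm_of_circulation (fun u v => altWeight_pos hα₀₁)
    (altWeight_conservation hH hα) hab
  refine ⟨H ∆ σ.cycleEdges, hH.symmDiff (cycleEdges_subset_edgeFinset hσ)
    (card_filter_cycleEdges_mem_eq_not_mem hσ), fun h => ?_⟩
  have heC : s(x, y) ∈ σ.cycleEdges := by
    simpa [hσab, hxy] using Equiv.Perm.mk_mem_cycleEdges (hσab ▸ hab.1.ne.symm : σ a ≠ a)
  exact (mem_symmDiff.1 h).elim (fun h => h.2 heC) fun h => h.2 he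

theorem IsFactor.exists_mem (c : G.Coloring Bool)
    (hα₀₁ : ∀ e ∈ G.edgeFinset, 0 < α e ∧ α e < 1) (hα : G.IsFractionalFactor φ α)
    (hH : G.IsFactor φ H) {e : Sym2 V} (he : e ∈ G.edgeFinset) (heH : e ∉ H) :
    ∃ H', G.IsFactor φ H' ∧ e ∈ H' := by
  obtain ⟨H', hH', heH'⟩ := hH.compl.exists_not_mem c
    (fun e he => ⟨by linarith [hα₀₁ e he], by linarith [hα₀₁ e he]⟩)
    (hα.one_sub hH.le_degree) (mem_sdiff.2 ⟨he, heH⟩)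
  refine ⟨G.edgeFinset \ H', ?_, mem_sdiff.2 ⟨he, heH'⟩⟩
  convert hH'.compl using 1
  funext v
  have := hH.le_degree v
  omega

theorem forall_free_of_strict_isFractionalFactor (c : G.Coloring Bool)
    (hα₀₁ : ∀ e ∈ G.edgeFinset, 0 < α e ∧ α e < 1) (hα : G.IsFractionalFactor φ α)
    (hH : G.IsFactor φ H) :
    ∀ e ∈ G.edgeFinset, ∃ H₁, G.IsFactor φ H₁ ∧ e ∈ H₁ ∧ ∃ H₂, G.IsFactor φ H₂ ∧ e ∉ H₂ := by
  intro e he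
  by_cases heH : e ∈ H
  · obtain ⟨H₂, hH₂, heH₂⟩ := hH.exists_not_mem c hα₀₁ hα heH
    exact ⟨H, hH, heH, H₂, hH₂, heH₂⟩
  · obtain ⟨H₁, hH₁, heH₁⟩ := hH.exists_mem c hα₀₁ hα he heH
    exact ⟨H₁, hH₁, heH₁, H, hH, heH⟩

end Alternating

end SimpleGraph

open SimpleGraph in
/-- There exists `α` on the edges of `G` with `0 < α e < 1` and with the incident sum at
every vertex `v` equal to `φ v` if and only if every edge of `G` is free (contained in
some element of `S_φ` and omitted by some element of `S_φ`), assuming `S_φ ≠ ∅`.  Here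
`S_φ` is encoded as the set of edge sets `H ⊆ E(G)` in which every vertex is incident to
exactly `φ v` edges of `H`. -/
theorem exists_strict_fractional_degree_flow_iff_all_edges_free
    {V : Type*} [Fintype V] [DecidableEq V]
    (G : SimpleGraph V) [DecidableRel G.Adj]
    (hbip : ∃ c : V → Bool, ∀ v w, G.Adj v w → c v ≠ c w)
    (φ : V → ℕ)
    (hne : ∃ H : Finset (Sym2 V), H ⊆ G.edgeFinset ∧
      ∀ v : V, (H.filter fun e => v ∈ e).card = φ v) :
    (∃ α : Sym2 V → ℝ,
        (∀ e ∈ G.edgeFinset, 0 < α e ∧ α e < 1) ∧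
        ∀ v : V, ∑ e ∈ G.edgeFinset.filter (fun e => v ∈ e), α e = (φ v : ℝ)) ↔
      (∀ e ∈ G.edgeFinset,
        ∃ H₁ : Finset (Sym2 V), (H₁ ⊆ G.edgeFinset ∧
            ∀ v : V, (H₁.filter fun e' => v ∈ e').card = φ v) ∧ e ∈ H₁ ∧
        ∃ H₂ : Finset (Sym2 V), (H₂ ⊆ G.edgeFinset ∧
            ∀ v : V, (H₂.filter fun e' => v ∈ e').card = φ v) ∧ e ∉ H₂) := by
  obtain ⟨color, hcolor⟩ := hbip
  obtain ⟨H, hH⟩ := hne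
  exact ⟨fun ⟨_, hα₀₁, hα⟩ =>
      forall_free_of_strict_isFractionalFactor (Coloring.mk color (hcolor _ _)) hα₀₁ hα hH,
    exists_strict_isFractionalFactor_of_forall_free ⟨H, hH⟩⟩
end

section
/- Let G be a grid graph and H a 2-factor of G such that no cell in B(H) is a local maximum or a local minimum of H. Then every cell in B(H) has its four corners meeting exactly two distinct cycles of H, and every cell in B(H) is either a critical boundary square or a corner boundary square. -/
open Finset

/-- Points of the integer grid `ℤ²`. -/
abbrev Pt : Type := ℤ × ℤ

/-- A vertex `(x, y)` is black when `x + y` is even. -/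
def IsBlack (p : Pt) : Prop := (p.1 + p.2) % 2 = 0

instance : DecidablePred IsBlack := fun p => by unfold IsBlack; infer_instance

/-- Two points of `ℤ²` are adjacent in the infinite grid graph exactly when they are at
Euclidean distance `1`. -/
def GridAdj (p q : Pt) : Prop :=
  q = p + (1, 0) ∨ p = q + (1, 0) ∨ q = p + (0, 1) ∨ p = q + (0, 1)

instance : DecidableRel GridAdj := fun p q => by unfold GridAdj; infer_instance

/-- The black-to-white oriented version of the edge `{p, q}`. -/
def bwEdge (p q : Pt) : Pt × Pt := if IsBlack p then (p, q) else (q, p)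

/-- The edges of the grid graph induced by `V`, each recorded as an ordered pair oriented
from its black endpoint to its white endpoint. -/
def edgesOf (V : Finset Pt) : Finset (Pt × Pt) :=
  (V ×ˢ V).filter fun e => IsBlack e.1 ∧ GridAdj e.1 e.2

/-- The cells of the grid graph induced by `V`: points `p` such that all four corners
`p`, `p+(1,0)`, `p+(0,1)`, `p+(1,1)` lie in `V`. -/
def cells (V : Finset Pt) : Finset Pt :=
  V.filter fun p => p + (1, 0) ∈ V ∧ p + (0, 1) ∈ V ∧ p + (1, 1) ∈ V

/-- The number of edges of `H` incident to `v`. -/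
def degIn (H : Finset (Pt × Pt)) (v : Pt) : ℕ :=
  (H.filter fun e => e.1 = v ∨ e.2 = v).card

/-- `H` is a 2-factor of the grid graph induced by `V`: a set of edges of that graph in
which every vertex of `V` is incident to exactly two edges. -/
def IsTwoFactor (V : Finset Pt) (H : Finset (Pt × Pt)) : Prop :=
  H ⊆ edgesOf V ∧ ∀ v ∈ V, degIn H v = 2

/-- The 1-chain `ω_H`: value `1` on (black-to-white oriented) edges of `H`, else `0`. -/
def omegaChain (H : Finset (Pt × Pt)) (e : Pt × Pt) : ℤ := if e ∈ H then 1 else 0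

/-- The clockwise boundary of the cell with lower-left corner `f`, as oriented edges. -/
def clwBoundary (f : Pt) : List (Pt × Pt) :=
  [(f, f + (0, 1)), (f + (0, 1), f + (1, 1)), (f + (1, 1), f + (1, 0)), (f + (1, 0), f)]

/-- The boundary 2-chain `df` of a cell `f`, evaluated on an oriented edge `e`:
`+1` if `e` appears in the clockwise traversal of `f`, `-1` if its reversal does,
and `0` otherwise.  (On black-to-white oriented edges this is the chain `df`.) -/
def dfChain (f : Pt) (e : Pt × Pt) : ℤ :=
  ((clwBoundary f).map fun d => if d = e then (1 : ℤ) else if d = (e.2, e.1) then -1 else 0).sum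

/-- The simple graph on `ℤ²` whose edges are those of `H`. -/
def graphOf (H : Finset (Pt × Pt)) : SimpleGraph Pt :=
  SimpleGraph.fromRel fun p q => (p, q) ∈ H

/-- `p(H)`: the number of cycles (connected components on `V`) of the 2-factor `H`. -/
noncomputable def numCycles (V : Finset Pt) (H : Finset (Pt × Pt)) : ℕ :=
  Nat.card ((graphOf H).induce (V : Set Pt)).ConnectedComponent

/-- The four corners of the cell `f`. -/
def cellCorners (f : Pt) : List Pt := [f, f + (1, 0), f + (0, 1), f + (1, 1)]

/-- `B(H)`: the set of cells of `G` whose four corners meet at least two distinct cycles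
of `H`. -/
def boundaryCells (V : Finset Pt) (H : Finset (Pt × Pt)) : Set Pt :=
  {f | f ∈ cells V ∧ ∃ p ∈ cellCorners f, ∃ q ∈ cellCorners f, ¬ (graphOf H).Reachable p q}

/-- The four sides of the cell `f`, each as a black-to-white oriented edge. -/
def cellSides (f : Pt) : Finset (Pt × Pt) :=
  {bwEdge f (f + (1, 0)), bwEdge (f + (0, 1)) (f + (1, 1)),
   bwEdge f (f + (0, 1)), bwEdge (f + (1, 0)) (f + (1, 1))}

/-- The graph, on a set `S` of grid points, with grid adjacency. -/
def gridGraphOn (S : Set Pt) : SimpleGraph S :=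
  SimpleGraph.fromRel fun p q => GridAdj p.1 q.1

/-- `H` and `H'` (both 2-factors of the grid graph on `V`) differ by a
`Z`-transformation at some cell of `V`. -/
def ZStep (V : Finset Pt) (H H' : Finset (Pt × Pt)) : Prop :=
  IsTwoFactor V H ∧ IsTwoFactor V H' ∧ ∃ f ∈ cells V,
    (∀ e ∈ edgesOf V, omegaChain H' e - omegaChain H e = dfChain f e) ∨
    (∀ e ∈ edgesOf V, omegaChain H' e - omegaChain H e = -dfChain f e)

/-- The four outward directions across the sides of a cell. -/
def sideDirs : Finset Pt := {(1, 0), (-1, 0), (0, 1), (0, -1)}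

/-- The cell `f` is higher than the face across the side of `f` in outward direction `d`:
the black endpoint of that side lies on the left when one crosses the side outward from
`f` and the side is in `H`, or the black endpoint lies on the right and the side is not
in `H`.  (For the bottom side the left endpoint is `f+(1,0)`, for the top side it is
`f+(0,1)`, for the left side it is `f`, and for the right side it is `f+(1,1)`.) -/
def HigherAcross (H : Finset (Pt × Pt)) (f d : Pt) : Prop :=
  if d = (0, -1) then ((bwEdge f (f + (1, 0)) ∈ H) ↔ IsBlack (f + (1, 0)))
  else if d = (0, 1) then ((bwEdge (f + (0, 1)) (f + (1, 1)) ∈ H) ↔ IsBlack (f + (0, 1)))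
  else if d = (-1, 0) then ((bwEdge f (f + (0, 1)) ∈ H) ↔ IsBlack f)
  else ((bwEdge (f + (1, 0)) (f + (1, 1)) ∈ H) ↔ IsBlack (f + (1, 1)))

/-- `f` is a local maximum of `H`: higher than the face across each of its four sides. -/
def IsLocMaxCell (H : Finset (Pt × Pt)) (f : Pt) : Prop :=
  ∀ d ∈ sideDirs, HigherAcross H f d

/-- `f` is a local minimum of `H`: lower than the face across each of its four sides. -/
def IsLocMinCell (H : Finset (Pt × Pt)) (f : Pt) : Prop :=
  ∀ d ∈ sideDirs, ¬ HigherAcross H f d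

/-- `f` is a critical boundary square of `H`: its corners consist of two adjacent corners
in one cycle and two adjacent corners in another, and exactly one of the two sides joining
same-cycle corners lies in `H`. -/
def IsCriticalSquare (H : Finset (Pt × Pt)) (f : Pt) : Prop :=
  ((graphOf H).Reachable f (f + (1, 0)) ∧
    (graphOf H).Reachable (f + (0, 1)) (f + (1, 1)) ∧
    ¬ (graphOf H).Reachable f (f + (0, 1)) ∧
    Xor' (bwEdge f (f + (1, 0)) ∈ H) (bwEdge (f + (0, 1)) (f + (1, 1)) ∈ H)) ∨
  ((graphOf H).Reachable f (f + (0, 1)) ∧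
    (graphOf H).Reachable (f + (1, 0)) (f + (1, 1)) ∧
    ¬ (graphOf H).Reachable f (f + (1, 0)) ∧
    Xor' (bwEdge f (f + (0, 1)) ∈ H) (bwEdge (f + (1, 0)) (f + (1, 1)) ∈ H))

/-- `f` is a corner boundary square of `H`: three of its corners lie in one cycle, the
fourth in another, and the two sides joining the three same-cycle corners lie in `H`. -/
def IsCornerSquare (H : Finset (Pt × Pt)) (f : Pt) : Prop :=
  (¬ (graphOf H).Reachable f (f + (1, 0)) ∧
    (graphOf H).Reachable (f + (1, 0)) (f + (1, 1)) ∧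
    (graphOf H).Reachable (f + (1, 1)) (f + (0, 1)) ∧
    bwEdge (f + (1, 0)) (f + (1, 1)) ∈ H ∧ bwEdge (f + (0, 1)) (f + (1, 1)) ∈ H) ∨
  (¬ (graphOf H).Reachable (f + (1, 0)) f ∧
    (graphOf H).Reachable f (f + (0, 1)) ∧
    (graphOf H).Reachable (f + (0, 1)) (f + (1, 1)) ∧
    bwEdge f (f + (0, 1)) ∈ H ∧ bwEdge (f + (0, 1)) (f + (1, 1)) ∈ H) ∨
  (¬ (graphOf H).Reachable (f + (0, 1)) f ∧
    (graphOf H).Reachable f (f + (1, 0)) ∧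
    (graphOf H).Reachable (f + (1, 0)) (f + (1, 1)) ∧
    bwEdge f (f + (1, 0)) ∈ H ∧ bwEdge (f + (1, 0)) (f + (1, 1)) ∈ H) ∨
  (¬ (graphOf H).Reachable (f + (1, 1)) f ∧
    (graphOf H).Reachable f (f + (1, 0)) ∧
    (graphOf H).Reachable f (f + (0, 1)) ∧
    bwEdge f (f + (1, 0)) ∈ H ∧ bwEdge f (f + (0, 1)) ∈ H)

section Helpers

lemma ptadd (p : Pt) (a b c d : ℤ) : p + (a, b) + (c, d) = p + (a + c, b + d) := by
  rw [add_assoc]; rfl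

lemma pt_add_zero' (p : Pt) : p + ((0 : ℤ), (0 : ℤ)) = p := by
  have h : ((0 : ℤ), (0 : ℤ)) = (0 : Pt) := rfl
  rw [h, add_zero]

lemma pt_ne_add (p : Pt) {d : Pt} (hd : d ≠ 0) : p ≠ p + d := by
  intro h
  apply hd
  have h2 : p + d = p + 0 := by rw [add_zero, ← h]
  exact add_left_cancel h2

lemma pt_add_ne (p : Pt) {d d' : Pt} (hd : d ≠ d') : p + d ≠ p + d' := by
  intro h; exact hd (add_left_cancel h)

lemma blk_add (p : Pt) (a b : ℤ) :
    IsBlack (p + (a, b)) ↔ (p.1 + p.2 + a + b) % 2 = 0 := by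
  unfold IsBlack
  simp only [Prod.fst_add, Prod.snd_add]
  constructor <;> intro h <;> omega

lemma bwEdge_comm {p q : Pt} (h : IsBlack p ↔ ¬ IsBlack q) : bwEdge p q = bwEdge q p := by
  unfold bwEdge
  by_cases hp : IsBlack p
  · rw [if_pos hp, if_neg (h.mp hp)]
  · rw [if_neg hp, if_pos (by by_contra hq; exact hp (h.mpr hq))]

lemma bwEdge_fst_or_snd (v w : Pt) : (bwEdge v w).1 = v ∨ (bwEdge v w).2 = v := by
  unfold bwEdge; split
  · exact Or.inl rfl
  · exact Or.inr rfl

lemma bwEdge_ne (v : Pt) {d d' : Pt} (h : d ≠ d') :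
    bwEdge v (v + d) ≠ bwEdge v (v + d') := by
  unfold bwEdge
  split <;> intro he <;> rw [Prod.mk.injEq] at he
  · exact pt_add_ne v h he.2
  · exact pt_add_ne v h he.1

lemma bw_ends_mem {V : Finset Pt} {H : Finset (Pt × Pt)} (hH : IsTwoFactor V H)
    {v w : Pt} (h : bwEdge v w ∈ H) : v ∈ V ∧ w ∈ V := by
  have h2 := hH.1 h
  unfold edgesOf at h2
  rw [Finset.mem_filter, Finset.mem_product] at h2
  unfold bwEdge at h2
  split at h2
  · exact h2.1
  · exact ⟨h2.1.2, h2.1.1⟩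

lemma adj_cases {p q : Pt} (h : GridAdj p q) :
    q = p + (1, 0) ∨ q = p + (-1, 0) ∨ q = p + (0, 1) ∨ q = p + (0, -1) := by
  unfold GridAdj at h
  rcases h with h | h | h | h
  · exact Or.inl h
  · refine Or.inr (Or.inl ?_)
    rw [h, ptadd]; norm_num [pt_add_zero']
  · exact Or.inr (Or.inr (Or.inl h))
  · refine Or.inr (Or.inr (Or.inr ?_))
    rw [h, ptadd]; norm_num [pt_add_zero']

lemma adj_symm {p q : Pt} (h : GridAdj p q) : GridAdj q p := by
  unfold GridAdj at h ⊢; tauto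

lemma adj_parity {p q : Pt} (h : GridAdj p q) : IsBlack p ↔ ¬ IsBlack q := by
  rcases adj_cases h with rfl | rfl | rfl | rfl <;>
    · rw [blk_add]; unfold IsBlack; omega

lemma reach_of_bw {H : Finset (Pt × Pt)} {p q : Pt} (h : bwEdge p q ∈ H) (hne : p ≠ q) :
    (graphOf H).Reachable p q := by
  apply SimpleGraph.Adj.reachable
  unfold graphOf
  rw [SimpleGraph.fromRel_adj]
  refine ⟨hne, ?_⟩
  unfold bwEdge at h
  split at h
  · exact Or.inl h
  · exact Or.inr h

lemma edge_cases {V : Finset Pt} {H : Finset (Pt × Pt)} (hH : IsTwoFactor V H) (v : Pt)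
    {e : Pt × Pt} (he : e ∈ H) (hinc : e.1 = v ∨ e.2 = v) :
    e = bwEdge v (v + (1, 0)) ∨ e = bwEdge v (v + (-1, 0)) ∨
      e = bwEdge v (v + (0, 1)) ∨ e = bwEdge v (v + (0, -1)) := by
  obtain ⟨p, q⟩ := e
  have hE := hH.1 he
  unfold edgesOf at hE
  rw [Finset.mem_filter] at hE
  obtain ⟨-, hblack, hadj⟩ := hE
  simp only at hblack hadj hinc
  rcases hinc with h | h
  · subst h
    have hbw : ∀ w, bwEdge p w = (p, w) := fun w => if_pos hblack
    rcases adj_cases hadj with rfl | rfl | rfl | rfl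
    · exact Or.inl (hbw _).symm
    · exact Or.inr (Or.inl (hbw _).symm)
    · exact Or.inr (Or.inr (Or.inl (hbw _).symm))
    · exact Or.inr (Or.inr (Or.inr (hbw _).symm))
  · subst h
    have hnb : ¬ IsBlack q := (adj_parity hadj).mp hblack
    have hbw : ∀ w, bwEdge q w = (w, q) := fun w => if_neg hnb
    rcases adj_cases (adj_symm hadj) with rfl | rfl | rfl | rfl
    · exact Or.inl (hbw _).symm
    · exact Or.inr (Or.inl (hbw _).symm)
    · exact Or.inr (Or.inr (Or.inl (hbw _).symm))
    · exact Or.inr (Or.inr (Or.inr (hbw _).symm))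

lemma pair_forced {F : Finset (Pt × Pt)} {a1 a2 a3 a4 : Pt × Pt}
    (hsub : ∀ e ∈ F, e = a1 ∨ e = a2 ∨ e = a3 ∨ e = a4)
    (hcard : F.card = 2) (h12 : a1 ≠ a2) (h3 : a3 ∉ F) (h4 : a4 ∉ F) :
    a1 ∈ F ∧ a2 ∈ F := by
  have hsub2 : F ⊆ {a1, a2} := by
    intro e he
    rcases hsub e he with rfl | rfl | rfl | rfl
    · exact Finset.mem_insert_self _ _
    · exact Finset.mem_insert_of_mem (Finset.mem_singleton_self _)
    · exact absurd he h3
    · exact absurd he h4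
  have hF : F = {a1, a2} := Finset.eq_of_subset_of_card_le hsub2
    (by simp [Finset.card_pair h12, hcard])
  rw [hF]
  exact ⟨Finset.mem_insert_self _ _, Finset.mem_insert_of_mem (Finset.mem_singleton_self _)⟩

lemma forcedPerp {V : Finset Pt} {H : Finset (Pt × Pt)} (hH : IsTwoFactor V H)
    {v : Pt} (hv : v ∈ V) {dh dv : Pt}
    (hdh : dh = (1, 0) ∨ dh = (-1, 0)) (hdv : dv = (0, 1) ∨ dv = (0, -1))
    (h1 : bwEdge v (v + dh) ∉ H) (h2 : bwEdge v (v + dv) ∉ H) :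
    ∀ d : Pt, (d = (1, 0) ∨ d = (-1, 0) ∨ d = (0, 1) ∨ d = (0, -1)) → d ≠ dh → d ≠ dv →
      bwEdge v (v + d) ∈ H := by
  classical
  set F := H.filter (fun e => e.1 = v ∨ e.2 = v) with hFdef
  have hcard : F.card = 2 := hH.2 v hv
  have hsub : ∀ e ∈ F,
      e = bwEdge v (v + (1, 0)) ∨ e = bwEdge v (v + (-1, 0)) ∨
        e = bwEdge v (v + (0, 1)) ∨ e = bwEdge v (v + (0, -1)) := by
    intro e he
    rw [hFdef, Finset.mem_filter] at he
    exact edge_cases hH v he.1 he.2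
  have hmemF : ∀ d : Pt, bwEdge v (v + d) ∈ F → bwEdge v (v + d) ∈ H := by
    intro d hd
    rw [hFdef, Finset.mem_filter] at hd
    exact hd.1
  have hnotF : ∀ d : Pt, bwEdge v (v + d) ∉ H → bwEdge v (v + d) ∉ F := by
    intro d hd hmem
    rw [hFdef, Finset.mem_filter] at hmem
    exact hd hmem.1
  rcases hdh with rfl | rfl <;> rcases hdv with rfl | rfl
  · have key := pair_forced (a1 := bwEdge v (v + (-1, 0))) (a2 := bwEdge v (v + (0, -1)))
      (a3 := bwEdge v (v + (1, 0))) (a4 := bwEdge v (v + (0, 1)))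
      (fun e he => by rcases hsub e he with h | h | h | h <;> tauto)
      hcard (bwEdge_ne v (by decide)) (hnotF _ h1) (hnotF _ h2)
    intro d hd hne1 hne2
    rcases hd with rfl | rfl | rfl | rfl
    · exact absurd rfl hne1
    · exact hmemF _ key.1
    · exact absurd rfl hne2
    · exact hmemF _ key.2
  · have key := pair_forced (a1 := bwEdge v (v + (-1, 0))) (a2 := bwEdge v (v + (0, 1)))
      (a3 := bwEdge v (v + (1, 0))) (a4 := bwEdge v (v + (0, -1)))
      (fun e he => by rcases hsub e he with h | h | h | h <;> tauto)
      hcard (bwEdge_ne v (by decide)) (hnotF _ h1) (hnotF _ h2)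
    intro d hd hne1 hne2
    rcases hd with rfl | rfl | rfl | rfl
    · exact absurd rfl hne1
    · exact hmemF _ key.1
    · exact hmemF _ key.2
    · exact absurd rfl hne2
  · have key := pair_forced (a1 := bwEdge v (v + (1, 0))) (a2 := bwEdge v (v + (0, -1)))
      (a3 := bwEdge v (v + (-1, 0))) (a4 := bwEdge v (v + (0, 1)))
      (fun e he => by rcases hsub e he with h | h | h | h <;> tauto)
      hcard (bwEdge_ne v (by decide)) (hnotF _ h1) (hnotF _ h2)
    intro d hd hne1 hne2
    rcases hd with rfl | rfl | rfl | rfl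
    · exact hmemF _ key.1
    · exact absurd rfl hne1
    · exact absurd rfl hne2
    · exact hmemF _ key.2
  · have key := pair_forced (a1 := bwEdge v (v + (1, 0))) (a2 := bwEdge v (v + (0, 1)))
      (a3 := bwEdge v (v + (-1, 0))) (a4 := bwEdge v (v + (0, -1)))
      (fun e he => by rcases hsub e he with h | h | h | h <;> tauto)
      hcard (bwEdge_ne v (by decide)) (hnotF _ h1) (hnotF _ h2)
    intro d hd hne1 hne2
    rcases hd with rfl | rfl | rfl | rfl
    · exact hmemF _ key.1
    · exact absurd rfl hne1
    · exact hmemF _ key.2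
    · exact absurd rfl hne2

lemma hA_bot (H : Finset (Pt × Pt)) (g : Pt) :
    HigherAcross H g (0, -1) ↔ ((bwEdge g (g + (1, 0)) ∈ H) ↔ IsBlack (g + (1, 0))) := by
  unfold HigherAcross
  rw [if_pos rfl]

lemma hA_top (H : Finset (Pt × Pt)) (g : Pt) :
    HigherAcross H g (0, 1) ↔
      ((bwEdge (g + (0, 1)) (g + (1, 1)) ∈ H) ↔ IsBlack (g + (0, 1))) := by
  unfold HigherAcross
  rw [if_neg (by decide), if_pos rfl]

lemma hA_left (H : Finset (Pt × Pt)) (g : Pt) :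
    HigherAcross H g (-1, 0) ↔ ((bwEdge g (g + (0, 1)) ∈ H) ↔ IsBlack g) := by
  unfold HigherAcross
  rw [if_neg (by decide), if_neg (by decide), if_pos rfl]

lemma hA_right (H : Finset (Pt × Pt)) (g : Pt) :
    HigherAcross H g (1, 0) ↔
      ((bwEdge (g + (1, 0)) (g + (1, 1)) ∈ H) ↔ IsBlack (g + (1, 1))) := by
  unfold HigherAcross
  rw [if_neg (by decide), if_neg (by decide), if_neg (by decide)]

lemma oppV {H : Finset (Pt × Pt)} {g : Pt}
    (hl : bwEdge g (g + (0, 1)) ∈ H) (hr : bwEdge (g + (1, 0)) (g + (1, 1)) ∈ H)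
    (hb : bwEdge g (g + (1, 0)) ∉ H) (ht : bwEdge (g + (0, 1)) (g + (1, 1)) ∉ H) :
    IsLocMaxCell H g ∨ IsLocMinCell H g := by
  have p10 : IsBlack (g + (1, 0)) ↔ ¬ IsBlack g := by
    rw [blk_add]; unfold IsBlack; omega
  have p01 : IsBlack (g + (0, 1)) ↔ ¬ IsBlack g := by
    rw [blk_add]; unfold IsBlack; omega
  have p11 : IsBlack (g + (1, 1)) ↔ IsBlack g := by
    rw [blk_add]; unfold IsBlack; omega
  by_cases hg : IsBlack g
  · left
    intro d hd
    simp only [sideDirs, Finset.mem_insert, Finset.mem_singleton] at hd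
    rcases hd with rfl | rfl | rfl | rfl
    · rw [hA_right]; tauto
    · rw [hA_left]; tauto
    · rw [hA_top]; tauto
    · rw [hA_bot]; tauto
  · right
    intro d hd
    simp only [sideDirs, Finset.mem_insert, Finset.mem_singleton] at hd
    rcases hd with rfl | rfl | rfl | rfl
    · rw [hA_right]; tauto
    · rw [hA_left]; tauto
    · rw [hA_top]; tauto
    · rw [hA_bot]; tauto

lemma oppH {H : Finset (Pt × Pt)} {g : Pt}
    (hb : bwEdge g (g + (1, 0)) ∈ H) (ht : bwEdge (g + (0, 1)) (g + (1, 1)) ∈ H)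
    (hl : bwEdge g (g + (0, 1)) ∉ H) (hr : bwEdge (g + (1, 0)) (g + (1, 1)) ∉ H) :
    IsLocMaxCell H g ∨ IsLocMinCell H g := by
  have p10 : IsBlack (g + (1, 0)) ↔ ¬ IsBlack g := by
    rw [blk_add]; unfold IsBlack; omega
  have p01 : IsBlack (g + (0, 1)) ↔ ¬ IsBlack g := by
    rw [blk_add]; unfold IsBlack; omega
  have p11 : IsBlack (g + (1, 1)) ↔ IsBlack g := by
    rw [blk_add]; unfold IsBlack; omega
  by_cases hg : IsBlack g
  · right
    intro d hd
    simp only [sideDirs, Finset.mem_insert, Finset.mem_singleton] at hd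
    rcases hd with rfl | rfl | rfl | rfl
    · rw [hA_right]; tauto
    · rw [hA_left]; tauto
    · rw [hA_top]; tauto
    · rw [hA_bot]; tauto
  · left
    intro d hd
    simp only [sideDirs, Finset.mem_insert, Finset.mem_singleton] at hd
    rcases hd with rfl | rfl | rfl | rfl
    · rw [hA_right]; tauto
    · rw [hA_left]; tauto
    · rw [hA_top]; tauto
    · rw [hA_bot]; tauto

lemma tri_anchors {G : SimpleGraph Pt} {f a b' : Pt}
    (hR : ∀ p ∈ cellCorners f, G.Reachable p a ∨ G.Reachable p b') :
    ∀ p ∈ cellCorners f, ∀ q ∈ cellCorners f, ∀ r ∈ cellCorners f,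
      p ≠ q → p ≠ r → q ≠ r →
        G.Reachable p q ∨ G.Reachable p r ∨ G.Reachable q r := by
  intro p hp q hq r hr _ _ _
  rcases hR p hp with h1 | h1 <;> rcases hR q hq with h2 | h2 <;>
    rcases hR r hr with h3 | h3
  · exact Or.inl (h1.trans h2.symm)
  · exact Or.inl (h1.trans h2.symm)
  · exact Or.inr (Or.inl (h1.trans h3.symm))
  · exact Or.inr (Or.inr (h2.trans h3.symm))
  · exact Or.inr (Or.inr (h2.trans h3.symm))
  · exact Or.inr (Or.inl (h1.trans h3.symm))
  · exact Or.inl (h1.trans h2.symm)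
  · exact Or.inl (h1.trans h2.symm)

end Helpers

section Reach

variable {V : Finset Pt} {H : Finset (Pt × Pt)}

lemma mem_cells_of_corners (h1 : g ∈ V) (h2 : g + (1, 0) ∈ V) (h3 : g + (0, 1) ∈ V)
    (h4 : g + (1, 1) ∈ V) : g ∈ cells V := by
  unfold cells
  rw [Finset.mem_filter]
  exact ⟨h1, h2, h3, h4⟩

lemma reach_bottom (hH : IsTwoFactor V H)
    (hno : ∀ f ∈ boundaryCells V H, ¬ IsLocMaxCell H f ∧ ¬ IsLocMinCell H f) {g : Pt}
    (hl : bwEdge g (g + (0, 1)) ∈ H) (hr : bwEdge (g + (1, 0)) (g + (1, 1)) ∈ H)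
    (h1 : g ∈ V) (h2 : g + (1, 0) ∈ V) (h3 : g + (0, 1) ∈ V) (h4 : g + (1, 1) ∈ V) :
    (graphOf H).Reachable g (g + (1, 0)) := by
  by_contra hR
  have Rl := reach_of_bw hl (pt_ne_add g (by decide))
  have Rr := reach_of_bw hr (pt_add_ne g (by decide))
  have hbg : bwEdge g (g + (1, 0)) ∉ H := fun h =>
    hR (reach_of_bw h (pt_ne_add g (by decide)))
  have htg : bwEdge (g + (0, 1)) (g + (1, 1)) ∉ H := fun h =>
    hR (Rl.trans ((reach_of_bw h (pt_add_ne g (by decide))).trans Rr.symm))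
  have hgB : g ∈ boundaryCells V H :=
    ⟨mem_cells_of_corners h1 h2 h3 h4, g, by simp [cellCorners], g + (1, 0),
      by simp [cellCorners], hR⟩
  rcases oppV hl hr hbg htg with h | h
  · exact (hno g hgB).1 h
  · exact (hno g hgB).2 h

lemma reach_top (hH : IsTwoFactor V H)
    (hno : ∀ f ∈ boundaryCells V H, ¬ IsLocMaxCell H f ∧ ¬ IsLocMinCell H f) {g : Pt}
    (hl : bwEdge g (g + (0, 1)) ∈ H) (hr : bwEdge (g + (1, 0)) (g + (1, 1)) ∈ H)
    (h1 : g ∈ V) (h2 : g + (1, 0) ∈ V) (h3 : g + (0, 1) ∈ V) (h4 : g + (1, 1) ∈ V) :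
    (graphOf H).Reachable (g + (0, 1)) (g + (1, 1)) := by
  by_contra hR
  have Rl := reach_of_bw hl (pt_ne_add g (by decide))
  have Rr := reach_of_bw hr (pt_add_ne g (by decide))
  have htg : bwEdge (g + (0, 1)) (g + (1, 1)) ∉ H := fun h =>
    hR (reach_of_bw h (pt_add_ne g (by decide)))
  have hbg : bwEdge g (g + (1, 0)) ∉ H := fun h =>
    hR (Rl.symm.trans ((reach_of_bw h (pt_ne_add g (by decide))).trans Rr))
  have hgB : g ∈ boundaryCells V H :=
    ⟨mem_cells_of_corners h1 h2 h3 h4, g + (0, 1), by simp [cellCorners], g + (1, 1),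
      by simp [cellCorners], hR⟩
  rcases oppV hl hr hbg htg with h | h
  · exact (hno g hgB).1 h
  · exact (hno g hgB).2 h

lemma reach_left (hH : IsTwoFactor V H)
    (hno : ∀ f ∈ boundaryCells V H, ¬ IsLocMaxCell H f ∧ ¬ IsLocMinCell H f) {g : Pt}
    (hb : bwEdge g (g + (1, 0)) ∈ H) (ht : bwEdge (g + (0, 1)) (g + (1, 1)) ∈ H)
    (h1 : g ∈ V) (h2 : g + (1, 0) ∈ V) (h3 : g + (0, 1) ∈ V) (h4 : g + (1, 1) ∈ V) :
    (graphOf H).Reachable g (g + (0, 1)) := by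
  by_contra hR
  have Rb := reach_of_bw hb (pt_ne_add g (by decide))
  have Rt := reach_of_bw ht (pt_add_ne g (by decide))
  have hlg : bwEdge g (g + (0, 1)) ∉ H := fun h =>
    hR (reach_of_bw h (pt_ne_add g (by decide)))
  have hrg : bwEdge (g + (1, 0)) (g + (1, 1)) ∉ H := fun h =>
    hR (Rb.trans ((reach_of_bw h (pt_add_ne g (by decide))).trans Rt.symm))
  have hgB : g ∈ boundaryCells V H :=
    ⟨mem_cells_of_corners h1 h2 h3 h4, g, by simp [cellCorners], g + (0, 1),
      by simp [cellCorners], hR⟩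
  rcases oppH hb ht hlg hrg with h | h
  · exact (hno g hgB).1 h
  · exact (hno g hgB).2 h

lemma reach_right (hH : IsTwoFactor V H)
    (hno : ∀ f ∈ boundaryCells V H, ¬ IsLocMaxCell H f ∧ ¬ IsLocMinCell H f) {g : Pt}
    (hb : bwEdge g (g + (1, 0)) ∈ H) (ht : bwEdge (g + (0, 1)) (g + (1, 1)) ∈ H)
    (h1 : g ∈ V) (h2 : g + (1, 0) ∈ V) (h3 : g + (0, 1) ∈ V) (h4 : g + (1, 1) ∈ V) :
    (graphOf H).Reachable (g + (1, 0)) (g + (1, 1)) := by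
  by_contra hR
  have Rb := reach_of_bw hb (pt_ne_add g (by decide))
  have Rt := reach_of_bw ht (pt_add_ne g (by decide))
  have hrg : bwEdge (g + (1, 0)) (g + (1, 1)) ∉ H := fun h =>
    hR (reach_of_bw h (pt_add_ne g (by decide)))
  have hlg : bwEdge g (g + (0, 1)) ∉ H := fun h =>
    hR (Rb.symm.trans ((reach_of_bw h (pt_ne_add g (by decide))).trans Rt))
  have hgB : g ∈ boundaryCells V H :=
    ⟨mem_cells_of_corners h1 h2 h3 h4, g + (1, 0), by simp [cellCorners], g + (1, 1),
      by simp [cellCorners], hR⟩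
  rcases oppH hb ht hlg hrg with h | h
  · exact (hno g hgB).1 h
  · exact (hno g hgB).2 h

end Reach

/-- If no cell of `B(H)` is a local maximum or a local minimum of the 2-factor `H`, then
every cell of `B(H)` has its corners meeting exactly two distinct cycles of `H`, and every
cell of `B(H)` is a critical boundary square or a corner boundary square. -/
theorem boundary_cells_critical_or_corner_of_no_extrema
    (V : Finset Pt) (H : Finset (Pt × Pt)) (hH : IsTwoFactor V H)
    (hno : ∀ f ∈ boundaryCells V H, ¬ IsLocMaxCell H f ∧ ¬ IsLocMinCell H f) :
    ∀ f ∈ boundaryCells V H,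
      ((∃ p ∈ cellCorners f, ∃ q ∈ cellCorners f, ¬ (graphOf H).Reachable p q) ∧
        ∀ p ∈ cellCorners f, ∀ q ∈ cellCorners f, ∀ r ∈ cellCorners f,
          p ≠ q → p ≠ r → q ≠ r →
            (graphOf H).Reachable p q ∨ (graphOf H).Reachable p r ∨
              (graphOf H).Reachable q r) ∧
      (IsCriticalSquare H f ∨ IsCornerSquare H f) := by
  intro f hf
  have hNO := hno f hf
  obtain ⟨hfc, p₀, hp₀, q₀, hq₀, hnr⟩ := hf
  unfold cells at hfc
  rw [Finset.mem_filter] at hfc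
  obtain ⟨hfV, hf10, hf01, hf11⟩ := hfc
  have nf10 : f ≠ f + (1, 0) := pt_ne_add f (by decide)
  have nf01 : f ≠ f + (0, 1) := pt_ne_add f (by decide)
  have n0111 : f + (0, 1) ≠ f + (1, 1) := pt_add_ne f (by decide)
  have n1011 : f + (1, 0) ≠ f + (1, 1) := pt_add_ne f (by decide)
  have E1 : f + (0, 1) + (1, 0) = f + (1, 1) := by simp only [ptadd]; norm_num
  have E2 : f + (0, 1) + (1, 1) = f + (1, 1) + (0, 1) := by simp only [ptadd]; norm_num
  have E3 : f + (0, -1) + (0, 1) = f := by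
    simp only [ptadd]; norm_num [pt_add_zero']
  have E4 : f + (0, -1) + (1, 0) = f + (1, 0) + (0, -1) := by simp only [ptadd]; norm_num
  have E5 : f + (0, -1) + (1, 1) = f + (1, 0) := by simp only [ptadd]; norm_num
  have E6 : f + (-1, 0) + (1, 0) = f := by
    simp only [ptadd]; norm_num [pt_add_zero']
  have E7 : f + (-1, 0) + (0, 1) = f + (0, 1) + (-1, 0) := by simp only [ptadd]; norm_num
  have E8 : f + (-1, 0) + (1, 1) = f + (0, 1) := by simp only [ptadd]; norm_num
  have E9 : f + (1, 0) + (0, 1) = f + (1, 1) := by simp only [ptadd]; norm_num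
  have E10 : f + (1, 0) + (1, 1) = f + (1, 1) + (1, 0) := by simp only [ptadd]; norm_num
  have E11 : f + (0, 1) + (0, -1) = f := by
    simp only [ptadd]; norm_num [pt_add_zero']
  have E12 : f + (1, 1) + (-1, 0) = f + (0, 1) := by simp only [ptadd]; norm_num
  have E13 : f + (1, 1) + (0, -1) = f + (1, 0) := by simp only [ptadd]; norm_num
  have E14 : f + (1, 0) + (-1, 0) = f := by
    simp only [ptadd]; norm_num [pt_add_zero']
  have PAR01 : IsBlack (f + (0, 1)) ↔ ¬ IsBlack f := by
    simp [IsBlack, ptadd, Prod.fst_add, Prod.snd_add]; omega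
  have PAR10 : IsBlack (f + (1, 0)) ↔ ¬ IsBlack f := by
    simp [IsBlack, ptadd, Prod.fst_add, Prod.snd_add]; omega
  have PARm01 : IsBlack (f + (0, -1)) ↔ ¬ IsBlack f := by
    simp [IsBlack, ptadd, Prod.fst_add, Prod.snd_add]; omega
  have PARm10 : IsBlack (f + (-1, 0)) ↔ ¬ IsBlack f := by
    simp [IsBlack, ptadd, Prod.fst_add, Prod.snd_add]; omega
  have PAR11t : IsBlack (f + (1, 1)) ↔ ¬ IsBlack (f + (0, 1)) := by
    simp [IsBlack, ptadd, Prod.fst_add, Prod.snd_add]; omega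
  have PAR11r : IsBlack (f + (1, 1)) ↔ ¬ IsBlack (f + (1, 0)) := by
    simp [IsBlack, ptadd, Prod.fst_add, Prod.snd_add]; omega
  have PARcd : IsBlack (f + (1, 0) + (0, -1)) ↔ ¬ IsBlack (f + (1, 0)) := by
    simp [IsBlack, ptadd, Prod.fst_add, Prod.snd_add]; omega
  have PAR1l : IsBlack (f + (0, 1) + (-1, 0)) ↔ ¬ IsBlack (f + (0, 1)) := by
    simp [IsBlack, ptadd, Prod.fst_add, Prod.snd_add]; omega
  have contra : (∀ p ∈ cellCorners f, (graphOf H).Reachable f p) → False := fun hA =>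
    hnr ((hA p₀ hp₀).symm.trans (hA q₀ hq₀))
  have mk : (graphOf H).Reachable f (f + (1, 0)) → (graphOf H).Reachable f (f + (0, 1)) →
      (graphOf H).Reachable f (f + (1, 1)) →
      ∀ p ∈ cellCorners f, (graphOf H).Reachable f p := by
    intro h1 h2 h3 p hp
    simp only [cellCorners, List.mem_cons, List.not_mem_nil, or_false] at hp
    rcases hp with rfl | rfl | rfl | rfl
    exacts [SimpleGraph.Reachable.refl _, h1, h2, h3]
  by_cases hb : bwEdge f (f + (1, 0)) ∈ H <;>
    by_cases ht : bwEdge (f + (0, 1)) (f + (1, 1)) ∈ H <;>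
    by_cases hl : bwEdge f (f + (0, 1)) ∈ H <;>
    by_cases hr : bwEdge (f + (1, 0)) (f + (1, 1)) ∈ H
  -- 1: {b,t,l,r}
  · exfalso
    have Rb := reach_of_bw hb nf10
    have Rl := reach_of_bw hl nf01
    have Rt := reach_of_bw ht n0111
    exact contra (mk Rb Rl (Rl.trans Rt))
  -- 2: {b,t,l}
  · exfalso
    have Rb := reach_of_bw hb nf10
    have Rl := reach_of_bw hl nf01
    have Rt := reach_of_bw ht n0111
    exact contra (mk Rb Rl (Rl.trans Rt))
  -- 3: {b,t,r}
  · exfalso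
    have Rb := reach_of_bw hb nf10
    have Rt := reach_of_bw ht n0111
    have Rr := reach_of_bw hr n1011
    exact contra (mk Rb ((Rb.trans Rr).trans Rt.symm) (Rb.trans Rr))
  -- 4: {b,t} opposite
  · exfalso
    rcases oppH hb ht hl hr with h | h
    · exact hNO.1 h
    · exact hNO.2 h
  -- 5: {b,l,r}
  · exfalso
    have Rb := reach_of_bw hb nf10
    have Rl := reach_of_bw hl nf01
    have Rr := reach_of_bw hr n1011
    exact contra (mk Rb Rl (Rb.trans Rr))
  -- 6: {b,l} corner (missing f+(1,1))
  · have Rb := reach_of_bw hb nf10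
    have Rl := reach_of_bw hl nf01
    have hn11 : ¬ (graphOf H).Reachable f (f + (1, 1)) := fun hco => contra (mk Rb Rl hco)
    refine ⟨⟨⟨p₀, hp₀, q₀, hq₀, hnr⟩, ?_⟩, ?_⟩
    · apply tri_anchors (a := f) (b' := f + (1, 1))
      intro p hp
      simp only [cellCorners, List.mem_cons, List.not_mem_nil, or_false] at hp
      rcases hp with rfl | rfl | rfl | rfl
      exacts [Or.inl (SimpleGraph.Reachable.refl _), Or.inl Rb.symm, Or.inl Rl.symm,
        Or.inr (SimpleGraph.Reachable.refl _)]
    · right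
      unfold IsCornerSquare
      exact Or.inr (Or.inr (Or.inr ⟨fun h => hn11 h.symm, Rb, Rl, hb, hl⟩))
  -- 7: {b,r} corner (missing f+(0,1))
  · have Rb := reach_of_bw hb nf10
    have Rr := reach_of_bw hr n1011
    have R3 := Rb.trans Rr
    have hn01 : ¬ (graphOf H).Reachable f (f + (0, 1)) := fun hco => contra (mk Rb hco R3)
    refine ⟨⟨⟨p₀, hp₀, q₀, hq₀, hnr⟩, ?_⟩, ?_⟩
    · apply tri_anchors (a := f) (b' := f + (0, 1))
      intro p hp
      simp only [cellCorners, List.mem_cons, List.not_mem_nil, or_false] at hp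
      rcases hp with rfl | rfl | rfl | rfl
      exacts [Or.inl (SimpleGraph.Reachable.refl _), Or.inl Rb.symm,
        Or.inr (SimpleGraph.Reachable.refl _), Or.inl R3.symm]
    · right
      unfold IsCornerSquare
      exact Or.inr (Or.inr (Or.inl ⟨fun h => hn01 h.symm, Rb, Rr, hb, hr⟩))
  -- 8: {b} critical
  · have Rb := reach_of_bw hb nf10
    have h1 : bwEdge (f + (0, 1)) (f + (0, 1) + (1, 0)) ∉ H := by rw [E1]; exact ht
    have h2 : bwEdge (f + (0, 1)) (f + (0, 1) + (0, -1)) ∉ H := by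
      rw [E11, bwEdge_comm PAR01]; exact hl
    have F1 := forcedPerp hH hf01 (Or.inl rfl) (Or.inr rfl) h1 h2
    have e_u1 : bwEdge (f + (0, 1)) (f + (0, 1) + (0, 1)) ∈ H :=
      F1 (0, 1) (Or.inr (Or.inr (Or.inl rfl))) (by decide) (by decide)
    have h1' : bwEdge (f + (1, 1)) (f + (1, 1) + (-1, 0)) ∉ H := by
      rw [E12, bwEdge_comm PAR11t]; exact ht
    have h2' : bwEdge (f + (1, 1)) (f + (1, 1) + (0, -1)) ∉ H := by
      rw [E13, bwEdge_comm PAR11r]; exact hr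
    have F2 := forcedPerp hH hf11 (Or.inr rfl) (Or.inr rfl) h1' h2'
    have e_u2 : bwEdge (f + (1, 1)) (f + (1, 1) + (0, 1)) ∈ H :=
      F2 (0, 1) (Or.inr (Or.inr (Or.inl rfl))) (by decide) (by decide)
    have Rtop : (graphOf H).Reachable (f + (0, 1)) (f + (1, 1)) := by
      have h := reach_bottom hH hno (g := f + (0, 1)) e_u1
        (by rw [E1, E2]; exact e_u2) hf01 (by rw [E1]; exact hf11)
        (bw_ends_mem hH e_u1).2 (by rw [E2]; exact (bw_ends_mem hH e_u2).2)
      rwa [E1] at h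
    by_cases hRlf : (graphOf H).Reachable f (f + (0, 1))
    · exfalso; exact contra (mk Rb hRlf (hRlf.trans Rtop))
    · refine ⟨⟨⟨p₀, hp₀, q₀, hq₀, hnr⟩, ?_⟩, ?_⟩
      · apply tri_anchors (a := f) (b' := f + (0, 1))
        intro p hp
        simp only [cellCorners, List.mem_cons, List.not_mem_nil, or_false] at hp
        rcases hp with rfl | rfl | rfl | rfl
        exacts [Or.inl (SimpleGraph.Reachable.refl _), Or.inl Rb.symm,
          Or.inr (SimpleGraph.Reachable.refl _), Or.inr Rtop.symm]
      · left
        unfold IsCriticalSquare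
        exact Or.inl ⟨Rb, Rtop, hRlf, Or.inl ⟨hb, ht⟩⟩
  -- 9: {t,l,r}
  · exfalso
    have Rt := reach_of_bw ht n0111
    have Rl := reach_of_bw hl nf01
    have Rr := reach_of_bw hr n1011
    exact contra (mk ((Rl.trans Rt).trans Rr.symm) Rl (Rl.trans Rt))
  -- 10: {t,l} corner (missing f+(1,0))
  · have Rt := reach_of_bw ht n0111
    have Rl := reach_of_bw hl nf01
    have R3 := Rl.trans Rt
    have hn10 : ¬ (graphOf H).Reachable f (f + (1, 0)) := fun hco => contra (mk hco Rl R3)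
    refine ⟨⟨⟨p₀, hp₀, q₀, hq₀, hnr⟩, ?_⟩, ?_⟩
    · apply tri_anchors (a := f) (b' := f + (1, 0))
      intro p hp
      simp only [cellCorners, List.mem_cons, List.not_mem_nil, or_false] at hp
      rcases hp with rfl | rfl | rfl | rfl
      exacts [Or.inl (SimpleGraph.Reachable.refl _), Or.inr (SimpleGraph.Reachable.refl _),
        Or.inl Rl.symm, Or.inl R3.symm]
    · right
      unfold IsCornerSquare
      exact Or.inr (Or.inl ⟨fun h => hn10 h.symm, Rl, Rt, hl, ht⟩)
  -- 11: {t,r} corner (missing f)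
  · have Rt := reach_of_bw ht n0111
    have Rr := reach_of_bw hr n1011
    have hn : ¬ (graphOf H).Reachable f (f + (1, 0)) := fun hco =>
      contra (mk hco ((hco.trans Rr).trans Rt.symm) (hco.trans Rr))
    refine ⟨⟨⟨p₀, hp₀, q₀, hq₀, hnr⟩, ?_⟩, ?_⟩
    · apply tri_anchors (a := f) (b' := f + (1, 0))
      intro p hp
      simp only [cellCorners, List.mem_cons, List.not_mem_nil, or_false] at hp
      rcases hp with rfl | rfl | rfl | rfl
      exacts [Or.inl (SimpleGraph.Reachable.refl _), Or.inr (SimpleGraph.Reachable.refl _),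
        Or.inr (Rt.trans Rr.symm), Or.inr Rr.symm]
    · right
      unfold IsCornerSquare
      exact Or.inl ⟨hn, Rr, Rt.symm, hr, ht⟩
  -- 12: {t} critical
  · have Rt := reach_of_bw ht n0111
    have F1 := forcedPerp hH hfV (Or.inl rfl) (Or.inl rfl) hb hl
    have e_fd : bwEdge f (f + (0, -1)) ∈ H :=
      F1 (0, -1) (Or.inr (Or.inr (Or.inr rfl))) (by decide) (by decide)
    have h1 : bwEdge (f + (1, 0)) (f + (1, 0) + (-1, 0)) ∉ H := by
      rw [E14, bwEdge_comm PAR10]; exact hb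
    have h2 : bwEdge (f + (1, 0)) (f + (1, 0) + (0, 1)) ∉ H := by rw [E9]; exact hr
    have F2 := forcedPerp hH hf10 (Or.inr rfl) (Or.inl rfl) h1 h2
    have e_cd : bwEdge (f + (1, 0)) (f + (1, 0) + (0, -1)) ∈ H :=
      F2 (0, -1) (Or.inr (Or.inr (Or.inr rfl))) (by decide) (by decide)
    have Rbot : (graphOf H).Reachable f (f + (1, 0)) := by
      have h := reach_top hH hno (g := f + (0, -1))
        (by rw [E3, bwEdge_comm PARm01]; exact e_fd)
        (by rw [E4, E5, bwEdge_comm PARcd]; exact e_cd)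
        (bw_ends_mem hH e_fd).2 (by rw [E4]; exact (bw_ends_mem hH e_cd).2)
        (by rw [E3]; exact hfV) (by rw [E5]; exact hf10)
      rwa [E3, E5] at h
    by_cases hRlf : (graphOf H).Reachable f (f + (0, 1))
    · exfalso; exact contra (mk Rbot hRlf (hRlf.trans Rt))
    · refine ⟨⟨⟨p₀, hp₀, q₀, hq₀, hnr⟩, ?_⟩, ?_⟩
      · apply tri_anchors (a := f) (b' := f + (0, 1))
        intro p hp
        simp only [cellCorners, List.mem_cons, List.not_mem_nil, or_false] at hp
        rcases hp with rfl | rfl | rfl | rfl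
        exacts [Or.inl (SimpleGraph.Reachable.refl _), Or.inl Rbot.symm,
          Or.inr (SimpleGraph.Reachable.refl _), Or.inr Rt.symm]
      · left
        unfold IsCriticalSquare
        exact Or.inl ⟨Rbot, Rt, hRlf, Or.inr ⟨ht, hb⟩⟩
  -- 13: {l,r} opposite
  · exfalso
    rcases oppV hl hr hb ht with h | h
    · exact hNO.1 h
    · exact hNO.2 h
  -- 14: {l} critical
  · have Rl := reach_of_bw hl nf01
    have h1 : bwEdge (f + (1, 0)) (f + (1, 0) + (-1, 0)) ∉ H := by
      rw [E14, bwEdge_comm PAR10]; exact hb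
    have h2 : bwEdge (f + (1, 0)) (f + (1, 0) + (0, 1)) ∉ H := by rw [E9]; exact hr
    have F1 := forcedPerp hH hf10 (Or.inr rfl) (Or.inl rfl) h1 h2
    have e_cr : bwEdge (f + (1, 0)) (f + (1, 0) + (1, 0)) ∈ H :=
      F1 (1, 0) (Or.inl rfl) (by decide) (by decide)
    have h1' : bwEdge (f + (1, 1)) (f + (1, 1) + (-1, 0)) ∉ H := by
      rw [E12, bwEdge_comm PAR11t]; exact ht
    have h2' : bwEdge (f + (1, 1)) (f + (1, 1) + (0, -1)) ∉ H := by
      rw [E13, bwEdge_comm PAR11r]; exact hr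
    have F2 := forcedPerp hH hf11 (Or.inr rfl) (Or.inr rfl) h1' h2'
    have e_2r : bwEdge (f + (1, 1)) (f + (1, 1) + (1, 0)) ∈ H :=
      F2 (1, 0) (Or.inl rfl) (by decide) (by decide)
    have Rright : (graphOf H).Reachable (f + (1, 0)) (f + (1, 1)) := by
      have h := reach_left hH hno (g := f + (1, 0)) e_cr
        (by rw [E9, E10]; exact e_2r) hf10 (bw_ends_mem hH e_cr).2
        (by rw [E9]; exact hf11) (by rw [E10]; exact (bw_ends_mem hH e_2r).2)
      rwa [E9] at h
    by_cases hRb : (graphOf H).Reachable f (f + (1, 0))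
    · exfalso; exact contra (mk hRb Rl (hRb.trans Rright))
    · refine ⟨⟨⟨p₀, hp₀, q₀, hq₀, hnr⟩, ?_⟩, ?_⟩
      · apply tri_anchors (a := f) (b' := f + (1, 0))
        intro p hp
        simp only [cellCorners, List.mem_cons, List.not_mem_nil, or_false] at hp
        rcases hp with rfl | rfl | rfl | rfl
        exacts [Or.inl (SimpleGraph.Reachable.refl _), Or.inr (SimpleGraph.Reachable.refl _),
          Or.inl Rl.symm, Or.inr Rright.symm]
      · left
        unfold IsCriticalSquare
        exact Or.inr ⟨Rl, Rright, hRb, Or.inl ⟨hl, hr⟩⟩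
  -- 15: {r} critical
  · have Rr := reach_of_bw hr n1011
    have F1 := forcedPerp hH hfV (Or.inl rfl) (Or.inl rfl) hb hl
    have e_fl : bwEdge f (f + (-1, 0)) ∈ H :=
      F1 (-1, 0) (Or.inr (Or.inl rfl)) (by decide) (by decide)
    have h1 : bwEdge (f + (0, 1)) (f + (0, 1) + (1, 0)) ∉ H := by rw [E1]; exact ht
    have h2 : bwEdge (f + (0, 1)) (f + (0, 1) + (0, -1)) ∉ H := by
      rw [E11, bwEdge_comm PAR01]; exact hl
    have F2 := forcedPerp hH hf01 (Or.inl rfl) (Or.inr rfl) h1 h2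
    have e_1l : bwEdge (f + (0, 1)) (f + (0, 1) + (-1, 0)) ∈ H :=
      F2 (-1, 0) (Or.inr (Or.inl rfl)) (by decide) (by decide)
    have Rleft : (graphOf H).Reachable f (f + (0, 1)) := by
      have h := reach_right hH hno (g := f + (-1, 0))
        (by rw [E6, bwEdge_comm PARm10]; exact e_fl)
        (by rw [E7, E8, bwEdge_comm PAR1l]; exact e_1l)
        (bw_ends_mem hH e_fl).2 (by rw [E6]; exact hfV)
        (by rw [E7]; exact (bw_ends_mem hH e_1l).2) (by rw [E8]; exact hf01)
      rwa [E6, E8] at h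
    by_cases hRb : (graphOf H).Reachable f (f + (1, 0))
    · exfalso; exact contra (mk hRb Rleft (hRb.trans Rr))
    · refine ⟨⟨⟨p₀, hp₀, q₀, hq₀, hnr⟩, ?_⟩, ?_⟩
      · apply tri_anchors (a := f) (b' := f + (1, 0))
        intro p hp
        simp only [cellCorners, List.mem_cons, List.not_mem_nil, or_false] at hp
        rcases hp with rfl | rfl | rfl | rfl
        exacts [Or.inl (SimpleGraph.Reachable.refl _), Or.inr (SimpleGraph.Reachable.refl _),
          Or.inl Rleft.symm, Or.inr Rr.symm]
      · left
        unfold IsCriticalSquare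
        exact Or.inr ⟨Rleft, Rr, hRb, Or.inr ⟨hr, hl⟩⟩
  -- 16: {} empty
  · exfalso
    have F0 := forcedPerp hH hfV (Or.inl rfl) (Or.inl rfl) hb hl
    have e_fd : bwEdge f (f + (0, -1)) ∈ H :=
      F0 (0, -1) (Or.inr (Or.inr (Or.inr rfl))) (by decide) (by decide)
    have e_fl : bwEdge f (f + (-1, 0)) ∈ H :=
      F0 (-1, 0) (Or.inr (Or.inl rfl)) (by decide) (by decide)
    have hc1 : bwEdge (f + (1, 0)) (f + (1, 0) + (-1, 0)) ∉ H := by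
      rw [E14, bwEdge_comm PAR10]; exact hb
    have hc2 : bwEdge (f + (1, 0)) (f + (1, 0) + (0, 1)) ∉ H := by rw [E9]; exact hr
    have Fc := forcedPerp hH hf10 (Or.inr rfl) (Or.inl rfl) hc1 hc2
    have e_cd : bwEdge (f + (1, 0)) (f + (1, 0) + (0, -1)) ∈ H :=
      Fc (0, -1) (Or.inr (Or.inr (Or.inr rfl))) (by decide) (by decide)
    have h11 : bwEdge (f + (0, 1)) (f + (0, 1) + (1, 0)) ∉ H := by rw [E1]; exact ht
    have h12 : bwEdge (f + (0, 1)) (f + (0, 1) + (0, -1)) ∉ H := by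
      rw [E11, bwEdge_comm PAR01]; exact hl
    have F1 := forcedPerp hH hf01 (Or.inl rfl) (Or.inr rfl) h11 h12
    have e_1u : bwEdge (f + (0, 1)) (f + (0, 1) + (0, 1)) ∈ H :=
      F1 (0, 1) (Or.inr (Or.inr (Or.inl rfl))) (by decide) (by decide)
    have e_1l : bwEdge (f + (0, 1)) (f + (0, 1) + (-1, 0)) ∈ H :=
      F1 (-1, 0) (Or.inr (Or.inl rfl)) (by decide) (by decide)
    have h21 : bwEdge (f + (1, 1)) (f + (1, 1) + (-1, 0)) ∉ H := by
      rw [E12, bwEdge_comm PAR11t]; exact ht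
    have h22 : bwEdge (f + (1, 1)) (f + (1, 1) + (0, -1)) ∉ H := by
      rw [E13, bwEdge_comm PAR11r]; exact hr
    have F2 := forcedPerp hH hf11 (Or.inr rfl) (Or.inr rfl) h21 h22
    have e_2u : bwEdge (f + (1, 1)) (f + (1, 1) + (0, 1)) ∈ H :=
      F2 (0, 1) (Or.inr (Or.inr (Or.inl rfl))) (by decide) (by decide)
    have claim1 : (graphOf H).Reachable f (f + (1, 0)) := by
      have h := reach_top hH hno (g := f + (0, -1))
        (by rw [E3, bwEdge_comm PARm01]; exact e_fd)
        (by rw [E4, E5, bwEdge_comm PARcd]; exact e_cd)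
        (bw_ends_mem hH e_fd).2 (by rw [E4]; exact (bw_ends_mem hH e_cd).2)
        (by rw [E3]; exact hfV) (by rw [E5]; exact hf10)
      rwa [E3, E5] at h
    have claim2 : (graphOf H).Reachable f (f + (0, 1)) := by
      have h := reach_right hH hno (g := f + (-1, 0))
        (by rw [E6, bwEdge_comm PARm10]; exact e_fl)
        (by rw [E7, E8, bwEdge_comm PAR1l]; exact e_1l)
        (bw_ends_mem hH e_fl).2 (by rw [E6]; exact hfV)
        (by rw [E7]; exact (bw_ends_mem hH e_1l).2) (by rw [E8]; exact hf01)
      rwa [E6, E8] at h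
    have claim3 : (graphOf H).Reachable (f + (0, 1)) (f + (1, 1)) := by
      have h := reach_bottom hH hno (g := f + (0, 1)) e_1u
        (by rw [E1, E2]; exact e_2u) hf01 (by rw [E1]; exact hf11)
        (bw_ends_mem hH e_1u).2 (by rw [E2]; exact (bw_ends_mem hH e_2u).2)
      rwa [E1] at h
    exact contra (mk claim1 claim2 (claim2.trans claim3))
end

section
/- Let G be a grid graph and let H, H' be 2-factors of G such that ω_{H'} − ω_H = Σ_f a_f · df for some family of integers (a_f) indexed by the cells f of G with a_f = 0 for every f ∈ B(H). Then any two vertices of G lying in distinct cycles of H also lie in distinct cycles of H'. -/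
open Finset

lemma reachable_of_adj_reachable {α : Type*} {G G' : SimpleGraph α}
    (h : ∀ a b, G.Adj a b → G'.Reachable a b) {p q : α} (hr : G.Reachable p q) :
    G'.Reachable p q := by
  obtain ⟨w⟩ := hr
  induction w with
  | nil => exact SimpleGraph.Reachable.refl _
  | cons h' _ ih => exact (h _ _ h').trans ih

lemma gridAdj_ne {p q : Pt} (h : GridAdj p q) : p ≠ q := by
  rcases p with ⟨a, b⟩; rcases q with ⟨c, d⟩
  simp only [GridAdj, Prod.mk_add_mk, Prod.mk.injEq, ne_eq] at h ⊢
  omega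

set_option maxHeartbeats 2000000 in
lemma endpoints_mem_of_dfChain_ne_zero (f : Pt) (e : Pt × Pt) (h : dfChain f e ≠ 0) :
    e.1 ∈ cellCorners f ∧ e.2 ∈ cellCorners f := by
  rcases f with ⟨s, t⟩
  rcases e with ⟨⟨u1, u2⟩, ⟨v1, v2⟩⟩
  simp only [dfChain, clwBoundary, cellCorners, List.map_cons, List.map_nil,
    List.sum_cons, List.sum_nil, add_zero, Prod.mk_add_mk, Prod.mk.injEq,
    List.mem_cons, List.not_mem_nil, or_false, ne_eq] at h ⊢
  split_ifs at h <;> omega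

/-- If `H`, `H'` are 2-factors with `ω_{H'} - ω_H = Σ_f a_f · df` over the cells of `V`,
where `a_f = 0` for every `f ∈ B(H)`, then vertices lying in distinct cycles of `H` also
lie in distinct cycles of `H'`. -/
theorem distinct_cycles_preserved_of_zero_on_boundary
    (V : Finset Pt) (H H' : Finset (Pt × Pt))
    (hH : IsTwoFactor V H) (hH' : IsTwoFactor V H')
    (a : Pt → ℤ) (ha : ∀ f ∈ boundaryCells V H, a f = 0)
    (hdiff : ∀ e ∈ edgesOf V,
      omegaChain H' e - omegaChain H e = ∑ f ∈ cells V, a f * dfChain f e) :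
    ∀ p ∈ V, ∀ q ∈ V,
      ¬ (graphOf H).Reachable p q → ¬ (graphOf H').Reachable p q := by
  intro p _ q _ hnot hreach
  apply hnot
  refine reachable_of_adj_reachable ?_ hreach
  intro x y hxy
  rw [graphOf, SimpleGraph.fromRel_adj] at hxy
  obtain ⟨-, hxy⟩ := hxy
  suffices key : ∀ u v : Pt, (u, v) ∈ H' → (graphOf H).Reachable u v by
    cases hxy with
    | inl h => exact key x y h
    | inr h => exact (key y x h).symm
  intro u v huv
  have hE : (u, v) ∈ edgesOf V := hH'.1 huv
  have hne : u ≠ v := by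
    have := (Finset.mem_filter.mp hE).2.2
    exact gridAdj_ne this
  by_cases h0 : (u, v) ∈ H
  · exact SimpleGraph.Adj.reachable (by
      rw [graphOf, SimpleGraph.fromRel_adj]
      exact ⟨hne, Or.inl h0⟩)
  · have hd := hdiff (u, v) hE
    simp only [omegaChain, huv, h0, if_true, if_false] at hd
    have hsum : ∑ f ∈ cells V, a f * dfChain f (u, v) ≠ 0 := by
      rw [← hd]; norm_num
    obtain ⟨f, hf, hfne⟩ := Finset.exists_ne_zero_of_sum_ne_zero hsum
    have haf : a f ≠ 0 := fun h => hfne (by rw [h, zero_mul])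
    have hdf : dfChain f (u, v) ≠ 0 := fun h => hfne (by rw [h, mul_zero])
    have hfB : f ∉ boundaryCells V H := fun hB => haf (ha f hB)
    have hcorners : ∀ p' ∈ cellCorners f, ∀ q' ∈ cellCorners f,
        (graphOf H).Reachable p' q' := by
      intro p' hp' q' hq'
      by_contra hc
      exact hfB ⟨hf, p', hp', q', hq', hc⟩
    obtain ⟨hu, hv⟩ := endpoints_mem_of_dfChain_ne_zero f (u, v) hdf
    exact hcorners u hu v hv
end
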